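/- arXiv:1708.07475 — 3 statements merged into one kernel-verified Lean document; each statement's English description precedes it below -/
import Mathlib

section
/- Let R be a commutative ring and A a commutative Hopf algebra over R, and suppose A is infinitesimally flat, i.e. the R-module I/I² is finitely presented and projective (equivalently, finitely generated and projective), where I = ker ε is the augmentation ideal. Let 𝔇_r ⊆ Der_R(A) be the R-submodule of right-invariant derivations and 𝔇_l ⊆ Der_R(A) the R-submodule of left-invariant derivations. Then the A-linear map A ⊗_R 𝔇_r → Der_R(A) induced by the bilinear map (a, ξ) ↦ a·ξ is bijective, and likewise the A-linear map A ⊗_R 𝔇_l → Der_R(A), (a, ξ) ↦ a·ξ, is bijective. -/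
/-!
In the convolution ring of `R`-linear maps `A → A` the identity is invertible, with inverse the
antipode `S`, which is an algebra map because `A` is commutative. Convolving a derivation along
`f` with an algebra map `k` gives a derivation along `f * k`, so `ξ ↦ ξ * S` and `d ↦ d * id`
are mutually inverse bijections between the derivations of `A` and the derivations along the unit
`η ∘ ε`, i.e. the tangent vectors at the identity. Tangent vectors with values in `B` are the
`R`-linear maps `I/I² → B`; hence `Der_R(A) ≅ Hom_R(I/I², A)`, and the right-invariant derivations
are exactly the images of the `R`-valued ones. Since `I/I²` is finitely generated projective,
`Hom_R(I/I², A) ≅ A ⊗ Hom_R(I/I², R)`, and composing these identifications gives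
`a ⊗ ξ ↦ a • ξ`. For left-invariant derivations use `id * d` and `S * ξ` instead.
-/

open TensorProduct

noncomputable section

section

variable (R A : Type*) [CommRing R] [CommRing A] [HopfAlgebra R A]

/-- The `R`-submodule of `Der_R(A)` consisting of the left-invariant derivations, i.e. those
`ξ` with `Δ ∘ ξ = (id_A ⊗ ξ) ∘ Δ`. -/
def leftInvariantDerivations : Submodule R (Derivation R A A) where
  carrier := {ξ | Coalgebra.comul (R := R) ∘ₗ (ξ : A →ₗ[R] A) =
    LinearMap.lTensor A (ξ : A →ₗ[R] A) ∘ₗ Coalgebra.comul}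
  add_mem' := by
    intro ξ η hξ hη
    simp only [Set.mem_setOf_eq, Derivation.coe_add_linearMap, LinearMap.comp_add,
      LinearMap.lTensor_add, LinearMap.add_comp] at *
    rw [hξ, hη]
  zero_mem' := by
    simp only [Set.mem_setOf_eq, Derivation.coe_zero_linearMap, LinearMap.comp_zero,
      LinearMap.lTensor_zero, LinearMap.zero_comp]
  smul_mem' := by
    intro r ξ hξ
    simp only [Set.mem_setOf_eq, Derivation.coe_smul_linearMap, LinearMap.comp_smul,
      LinearMap.lTensor_smul, LinearMap.smul_comp] at *
    rw [hξ]

/-- The `R`-submodule of `Der_R(A)` consisting of the right-invariant derivations, i.e. those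
`ξ` with `Δ ∘ ξ = (ξ ⊗ id_A) ∘ Δ`. -/
def rightInvariantDerivations : Submodule R (Derivation R A A) where
  carrier := {ξ | Coalgebra.comul (R := R) ∘ₗ (ξ : A →ₗ[R] A) =
    LinearMap.rTensor A (ξ : A →ₗ[R] A) ∘ₗ Coalgebra.comul}
  add_mem' := by
    intro ξ η hξ hη
    simp only [Set.mem_setOf_eq, Derivation.coe_add_linearMap, LinearMap.comp_add,
      LinearMap.rTensor_add, LinearMap.add_comp] at *
    rw [hξ, hη]
  zero_mem' := by
    simp only [Set.mem_setOf_eq, Derivation.coe_zero_linearMap, LinearMap.comp_zero,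
      LinearMap.rTensor_zero, LinearMap.zero_comp]
  smul_mem' := by
    intro r ξ hξ
    simp only [Set.mem_setOf_eq, Derivation.coe_smul_linearMap, LinearMap.comp_smul,
      LinearMap.rTensor_smul, LinearMap.smul_comp] at *
    rw [hξ]

/-- The `R`-linear map `A ⊗_R p → Der_R(A)` induced by the bilinear map `(a, ξ) ↦ a·ξ`, for an
`R`-submodule `p` of the `A`-module `Der_R(A)`. -/
def derivationSMulLift (p : Submodule R (Derivation R A A)) :
    A ⊗[R] p →ₗ[R] Derivation R A A :=
  TensorProduct.lift
    { toFun := fun a =>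
        { toFun := fun ξ => a • (ξ : Derivation R A A)
          map_add' := fun ξ η => by simp [smul_add]
          map_smul' := fun r ξ => by simp [smul_comm r a] }
      map_add' := fun a b => by ext ξ; simp [add_smul]
      map_smul' := fun r a => by ext ξ; simp [smul_assoc] }

end

open Coalgebra WithConv

section DerivationAlong

variable {R C B : Type*} [CommSemiring R] [CommSemiring B] [Algebra R B]

def IsDerivationAlong [Semiring C] [Algebra R C] (f ξ : WithConv (C →ₗ[R] B)) : Prop :=
  ∀ x y, ξ (x * y) = f x * ξ y + f y * ξ x

variable [Semiring C] [Bialgebra R C] {f ξ : WithConv (C →ₗ[R] B)}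

lemma IsDerivationAlong.convMul_algHom (hξ : IsDerivationAlong f ξ) (k : C →ₐ[R] B) :
    IsDerivationAlong (f * toConv k.toLinearMap) (ξ * toConv k.toLinearMap) := by
  intro x y
  simp only [((ℛ R x).mul (ℛ R y)).convMul_apply, (ℛ R x).convMul_apply,
    (ℛ R y).convMul_apply, Coalgebra.Repr.mul_index, Coalgebra.Repr.mul_left,
    Coalgebra.Repr.mul_right, Finset.sum_product, Finset.sum_mul_sum]
  rw [Finset.sum_comm (s := (ℛ R y).index), ← Finset.sum_add_distrib]
  refine Finset.sum_congr rfl fun i _ => ?_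
  rw [← Finset.sum_add_distrib]
  refine Finset.sum_congr rfl fun j _ => ?_
  rw [hξ]
  simp only [AlgHom.toLinearMap_apply, map_mul]
  ring

lemma IsDerivationAlong.algHom_convMul (hξ : IsDerivationAlong f ξ) (k : C →ₐ[R] B) :
    IsDerivationAlong (toConv k.toLinearMap * f) (toConv k.toLinearMap * ξ) := by
  intro x y
  simp only [((ℛ R x).mul (ℛ R y)).convMul_apply, (ℛ R x).convMul_apply,
    (ℛ R y).convMul_apply, Coalgebra.Repr.mul_index, Coalgebra.Repr.mul_left,
    Coalgebra.Repr.mul_right, Finset.sum_product, Finset.sum_mul_sum]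
  rw [Finset.sum_comm (s := (ℛ R y).index), ← Finset.sum_add_distrib]
  refine Finset.sum_congr rfl fun i _ => ?_
  rw [← Finset.sum_add_distrib]
  refine Finset.sum_congr rfl fun j _ => ?_
  rw [hξ]
  simp only [AlgHom.toLinearMap_apply, map_mul]
  ring

end DerivationAlong

section Invariance

variable {R A : Type*} [CommSemiring R] [Semiring A] [Bialgebra R A]

lemma comul_comp_algebraMap_convMul_id (ψ : A →ₗ[R] R) :
    comul ∘ₗ (toConv (Algebra.linearMap R A ∘ₗ ψ) * toConv LinearMap.id).ofConv =
      (toConv (Algebra.linearMap R A ∘ₗ ψ) * toConv LinearMap.id).ofConv.rTensor A ∘ₗ comul := by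
  ext a
  let 𝓡 := ℛ R a
  have key := congr((TensorProduct.lid R (A ⊗[R] A)) (ψ.rTensor (A ⊗[R] A)
    $(sum_tmul_tmul_eq 𝓡 (fun i => ℛ R (𝓡.left i)) (fun i => ℛ R (𝓡.right i)))))
  simp only [map_sum, LinearMap.rTensor_tmul, TensorProduct.lid_tmul] at key
  simp only [LinearMap.comp_apply, (ℛ R _).convMul_apply, ← 𝓡.eq, map_sum,
    LinearMap.rTensor_tmul, Algebra.linearMap_apply, ← Algebra.smul_def, LinearMap.id_apply,
    map_smul, TensorProduct.sum_tmul]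
  simp only [← (ℛ R _).eq, Finset.smul_sum]
  exact key.symm

lemma comul_comp_id_convMul_algebraMap (ψ : A →ₗ[R] R) :
    comul ∘ₗ (toConv LinearMap.id * toConv (Algebra.linearMap R A ∘ₗ ψ)).ofConv =
      (toConv LinearMap.id * toConv (Algebra.linearMap R A ∘ₗ ψ)).ofConv.lTensor A ∘ₗ comul := by
  ext a
  let 𝓡 := ℛ R a
  have key := congr((TensorProduct.rid R (A ⊗[R] A))
    (((TensorProduct.assoc R A A R).symm.toLinearMap ∘ₗ (ψ.lTensor A).lTensor A)
    $(sum_tmul_tmul_eq 𝓡 (fun i => ℛ R (𝓡.left i)) (fun i => ℛ R (𝓡.right i)))))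
  simp only [map_sum, LinearMap.lTensor_tmul, LinearMap.comp_apply, LinearEquiv.coe_coe,
    TensorProduct.assoc_symm_tmul, TensorProduct.rid_tmul] at key
  simp only [LinearMap.comp_apply, (ℛ R _).convMul_apply, ← 𝓡.eq, map_sum,
    LinearMap.lTensor_tmul, Algebra.linearMap_apply, ← Algebra.commutes, ← Algebra.smul_def,
    LinearMap.id_apply, map_smul, TensorProduct.tmul_sum, TensorProduct.tmul_smul]
  simp only [← (ℛ R _).eq, Finset.smul_sum]
  exact key

lemma algebraMap_counit_comp_convMul_id {ξ : A →ₗ[R] A}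
    (hξ : comul ∘ₗ ξ = ξ.rTensor A ∘ₗ comul) :
    toConv (Algebra.linearMap R A ∘ₗ counit ∘ₗ ξ) * toConv LinearMap.id = toConv ξ := by
  ext a
  have h := congr(TensorProduct.lid R A (counit.rTensor A $(LinearMap.congr_fun hξ a)))
  simp only [LinearMap.comp_apply, rTensor_counit_comul, TensorProduct.lid_tmul, one_smul,
    ← (ℛ R a).eq, map_sum, LinearMap.rTensor_tmul] at h
  simp [(ℛ R a).convMul_apply, h, Algebra.smul_def]

lemma id_convMul_algebraMap_counit_comp {ξ : A →ₗ[R] A}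
    (hξ : comul ∘ₗ ξ = ξ.lTensor A ∘ₗ comul) :
    toConv LinearMap.id * toConv (Algebra.linearMap R A ∘ₗ counit ∘ₗ ξ) = toConv ξ := by
  ext a
  have h := congr(TensorProduct.rid R A (counit.lTensor A $(LinearMap.congr_fun hξ a)))
  simp only [LinearMap.comp_apply, lTensor_counit_comul, TensorProduct.rid_tmul, one_smul,
    ← (ℛ R a).eq, map_sum, LinearMap.lTensor_tmul] at h
  simp [(ℛ R a).convMul_apply, h, Algebra.smul_def, Algebra.commutes]

end Invariance

namespace Bialgebra

variable (R A : Type*) [CommRing R] [CommRing A] [Bialgebra R A]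

abbrev augmentationIdeal : Ideal A := RingHom.ker (counitAlgHom R A)

variable {R A} in
@[simp] lemma counit_coe_augmentationIdeal (x : augmentationIdeal R A) :
    counit (R := R) (x : A) = 0 :=
  x.2

lemma sub_algebraMap_counit_mem_augmentationIdeal (a : A) :
    a - algebraMap R A (counit a) ∈ augmentationIdeal R A := by
  simp

def cotangentProj : A →ₗ[R] (augmentationIdeal R A).Cotangent :=
  ((augmentationIdeal R A).toCotangent.restrictScalars R) ∘ₗ
    (LinearMap.id - Algebra.linearMap R A ∘ₗ counit).codRestrict
      ((augmentationIdeal R A).restrictScalars R)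
      (sub_algebraMap_counit_mem_augmentationIdeal R A)

variable {R A}

lemma cotangentProj_apply (a : A) :
    cotangentProj R A a = (augmentationIdeal R A).toCotangent
      ⟨_, sub_algebraMap_counit_mem_augmentationIdeal R A a⟩ := rfl

lemma cotangentProj_of_mem (x : augmentationIdeal R A) :
    cotangentProj R A x = (augmentationIdeal R A).toCotangent x := by
  simp [cotangentProj_apply]

lemma cotangentProj_surjective : Function.Surjective (cotangentProj R A) := fun m => by
  obtain ⟨x, rfl⟩ := Ideal.toCotangent_surjective _ m
  exact ⟨x, cotangentProj_of_mem x⟩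

lemma cotangentProj_mul (x y : A) :
    cotangentProj R A (x * y) = counit (R := R) x • cotangentProj R A y +
      counit (R := R) y • cotangentProj R A x := by
  rw [← sub_eq_zero, cotangentProj_apply, cotangentProj_apply, cotangentProj_apply,
    ← LinearMap.map_smul_of_tower, ← LinearMap.map_smul_of_tower, ← map_add, ← map_sub,
    Ideal.toCotangent_eq_zero, pow_two]
  convert Ideal.mul_mem_mul (sub_algebraMap_counit_mem_augmentationIdeal R A x)
    (sub_algebraMap_counit_mem_augmentationIdeal R A y) using 1
  simp [Algebra.smul_def]
  ring

variable {B : Type*} [CommRing B] [Algebra R B]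

lemma isDerivationAlong_one_comp_cotangentProj
    (φ : (augmentationIdeal R A).Cotangent →ₗ[R] B) :
    IsDerivationAlong 1 (toConv (φ ∘ₗ cotangentProj R A)) := by
  intro x y
  simp [cotangentProj_mul, Algebra.smul_def]

lemma _root_.IsDerivationAlong.exists_comp_cotangentProj {d : WithConv (A →ₗ[R] B)}
    (hd : IsDerivationAlong 1 d) :
    ∃ φ : (augmentationIdeal R A).Cotangent →ₗ[R] B, φ ∘ₗ cotangentProj R A = d.ofConv := by
  refine ⟨Ideal.Cotangent.lift (d.ofConv ∘ₗ (augmentationIdeal R A).subtype.restrictScalars R)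
    fun x y => by simp [hd (x : A) y], ?_⟩
  have hd1 : d 1 = 0 := by simpa using hd 1 1
  ext a
  simp [cotangentProj_apply, hd1, Algebra.algebraMap_eq_smul_one]

end Bialgebra

section Translate

variable {R A : Type*} [CommRing R] [CommRing A] [HopfAlgebra R A]

open Bialgebra HopfAlgebra

local notation "𝕀" => (toConv LinearMap.id : WithConv (A →ₗ[R] A))
local notation "𝕊" => (toConv (antipode R) : WithConv (A →ₗ[R] A))

lemma Derivation.isDerivationAlong_id (D : Derivation R A A) :
    IsDerivationAlong 𝕀 (toConv (D : A →ₗ[R] A)) := fun x y => by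
  simp [D.leibniz, smul_eq_mul]

lemma Derivation.isDerivationAlong_one_counit_comp (D : Derivation R A A) :
    IsDerivationAlong 1 (toConv (counit ∘ₗ (D : A →ₗ[R] A))) := fun x y => by
  simp [D.leibniz, smul_eq_mul]

def IsDerivationAlong.toDerivation {ξ : WithConv (A →ₗ[R] A)} (hξ : IsDerivationAlong 𝕀 ξ) :
    Derivation R A A :=
  Derivation.mk' ξ.ofConv hξ

def rightTranslate : ((augmentationIdeal R A).Cotangent →ₗ[R] A) →ₗ[A] Derivation R A A where
  toFun φ := IsDerivationAlong.toDerivation (ξ := toConv (φ ∘ₗ cotangentProj R A) * 𝕀) <| by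
    simpa using (isDerivationAlong_one_comp_cotangentProj φ).convMul_algHom (AlgHom.id R A)
  map_add' φ ψ := Derivation.ext fun x => by
    change (toConv ((φ + ψ) ∘ₗ cotangentProj R A) * 𝕀) x = _
    rw [LinearMap.add_comp, toConv_add, add_mul]
    rfl
  map_smul' a φ := Derivation.ext fun x => by
    change (toConv ((a • φ) ∘ₗ cotangentProj R A) * 𝕀) x = _
    rw [LinearMap.smul_comp, toConv_smul, smul_mul_assoc]
    rfl

def leftTranslate : ((augmentationIdeal R A).Cotangent →ₗ[R] A) →ₗ[A] Derivation R A A where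
  toFun φ := IsDerivationAlong.toDerivation (ξ := 𝕀 * toConv (φ ∘ₗ cotangentProj R A)) <| by
    simpa using (isDerivationAlong_one_comp_cotangentProj φ).algHom_convMul (AlgHom.id R A)
  map_add' φ ψ := Derivation.ext fun x => by
    change (𝕀 * toConv ((φ + ψ) ∘ₗ cotangentProj R A)) x = _
    rw [LinearMap.add_comp, toConv_add, mul_add]
    rfl
  map_smul' a φ := Derivation.ext fun x => by
    change (𝕀 * toConv ((a • φ) ∘ₗ cotangentProj R A)) x = _
    rw [LinearMap.smul_comp, toConv_smul, mul_smul_comm]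
    rfl

lemma toConv_rightTranslate (φ : (augmentationIdeal R A).Cotangent →ₗ[R] A) :
    toConv (rightTranslate φ : A →ₗ[R] A) = toConv (φ ∘ₗ cotangentProj R A) * 𝕀 := rfl

lemma toConv_leftTranslate (φ : (augmentationIdeal R A).Cotangent →ₗ[R] A) :
    toConv (leftTranslate φ : A →ₗ[R] A) = 𝕀 * toConv (φ ∘ₗ cotangentProj R A) := rfl

lemma derivation_eq_of_toConv_eq {D D' : Derivation R A A}
    (h : toConv (D : A →ₗ[R] A) = toConv (D' : A →ₗ[R] A)) : D = D' :=
  Derivation.ext fun x => LinearMap.congr_fun congr(ofConv $h) x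

lemma rightTranslate_bijective : Function.Bijective (rightTranslate (R := R) (A := A)) := by
  refine ⟨fun φ ψ h => ?_, fun D => ?_⟩
  · have h' := congr(toConv ($h : A →ₗ[R] A) * 𝕊)
    simp only [toConv_rightTranslate, mul_assoc, LinearMap.id_mul_antipode, mul_one] at h'
    exact (LinearMap.cancel_right cotangentProj_surjective).1 congr(ofConv $h')
  · have hD : IsDerivationAlong 1 (toConv (D : A →ₗ[R] A) * 𝕊) := by
      simpa using D.isDerivationAlong_id.convMul_algHom (antipodeAlgHom R A)
    obtain ⟨φ, hφ⟩ := hD.exists_comp_cotangentProj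
    refine ⟨φ, derivation_eq_of_toConv_eq ?_⟩
    rw [toConv_rightTranslate, hφ, toConv_ofConv, mul_assoc, LinearMap.antipode_mul_id, mul_one]

lemma leftTranslate_bijective : Function.Bijective (leftTranslate (R := R) (A := A)) := by
  refine ⟨fun φ ψ h => ?_, fun D => ?_⟩
  · have h' := congr(𝕊 * toConv ($h : A →ₗ[R] A))
    simp only [toConv_leftTranslate, ← mul_assoc, LinearMap.antipode_mul_id, one_mul] at h'
    exact (LinearMap.cancel_right cotangentProj_surjective).1 congr(ofConv $h')
  · have hD : IsDerivationAlong 1 (𝕊 * toConv (D : A →ₗ[R] A)) := by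
      simpa using D.isDerivationAlong_id.algHom_convMul (antipodeAlgHom R A)
    obtain ⟨φ, hφ⟩ := hD.exists_comp_cotangentProj
    refine ⟨φ, derivation_eq_of_toConv_eq ?_⟩
    rw [toConv_leftTranslate, hφ, toConv_ofConv, ← mul_assoc, LinearMap.id_mul_antipode, one_mul]

end Translate

section InvariantDerivations

variable {R A : Type*} [CommRing R] [CommRing A] [HopfAlgebra R A]

open Bialgebra

lemma mem_rightInvariantDerivations_iff (D : Derivation R A A) :
    D ∈ rightInvariantDerivations R A ↔
      ∃ φ : (augmentationIdeal R A).Cotangent →ₗ[R] R,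
        rightTranslate (Algebra.linearMap R A ∘ₗ φ) = D := by
  refine ⟨fun hD => ?_, ?_⟩
  · obtain ⟨φ, hφ⟩ := D.isDerivationAlong_one_counit_comp.exists_comp_cotangentProj
    refine ⟨φ, derivation_eq_of_toConv_eq ?_⟩
    rw [toConv_rightTranslate, LinearMap.comp_assoc, hφ]
    exact algebraMap_counit_comp_convMul_id hD
  · rintro ⟨φ, rfl⟩
    exact comul_comp_algebraMap_convMul_id (φ ∘ₗ cotangentProj R A)

lemma mem_leftInvariantDerivations_iff (D : Derivation R A A) :
    D ∈ leftInvariantDerivations R A ↔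
      ∃ φ : (augmentationIdeal R A).Cotangent →ₗ[R] R,
        leftTranslate (Algebra.linearMap R A ∘ₗ φ) = D := by
  refine ⟨fun hD => ?_, ?_⟩
  · obtain ⟨φ, hφ⟩ := D.isDerivationAlong_one_counit_comp.exists_comp_cotangentProj
    refine ⟨φ, derivation_eq_of_toConv_eq ?_⟩
    rw [toConv_leftTranslate, LinearMap.comp_assoc, hφ]
    exact id_convMul_algebraMap_counit_comp hD
  · rintro ⟨φ, rfl⟩
    exact comul_comp_id_convMul_algebraMap (φ ∘ₗ cotangentProj R A)

theorem derivationSMulLift_bijective_of_linearEquiv {M : Type*} [AddCommGroup M] [Module R M]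
    [Module.Finite R M] [Module.Projective R M] (p : Submodule R (Derivation R A A))
    (Φ : (M →ₗ[R] A) ≃ₗ[A] Derivation R A A)
    (hp : ∀ D, D ∈ p ↔ ∃ φ : M →ₗ[R] R, Φ (Algebra.linearMap R A ∘ₗ φ) = D) :
    Function.Bijective (derivationSMulLift R A p) := by
  let Ψ : (M →ₗ[R] R) →ₗ[R] p := LinearMap.codRestrict p
    (Φ.toLinearMap.restrictScalars R ∘ₗ (Algebra.linearMap R A).compRight R)
    fun φ => (hp _).2 ⟨φ, rfl⟩
  have hΨ : Function.Bijective Ψ := by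
    refine ⟨fun φ ψ h => ?_, fun ⟨D, hD⟩ => ?_⟩
    · have h' : Algebra.linearMap R A ∘ₗ φ = Algebra.linearMap R A ∘ₗ ψ :=
        Φ.injective congr(($h : Derivation R A A))
      ext m
      simpa using congr(counit (R := R) ($h' m))
    · obtain ⟨φ, hφ⟩ := (hp D).1 hD
      exact ⟨φ, Subtype.ext hφ⟩
  let e := TensorProduct.congr (LinearEquiv.refl R A) (LinearEquiv.ofBijective Ψ hΨ)
  have he : derivationSMulLift R A p ∘ₗ e.toLinearMap = Φ.toLinearMap.restrictScalars R ∘ₗ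
      dualTensorHom R M A ∘ₗ (TensorProduct.comm R A (Module.Dual R M)).toLinearMap := by
    refine TensorProduct.ext' fun a φ => ?_
    simp only [derivationSMulLift, e, Ψ, LinearMap.comp_apply, LinearEquiv.coe_coe,
      TensorProduct.congr_tmul, LinearEquiv.refl_apply, LinearEquiv.ofBijective_apply,
      TensorProduct.lift.tmul, LinearMap.coe_mk, AddHom.coe_mk, LinearMap.codRestrict_apply,
      LinearMap.coe_restrictScalars, TensorProduct.comm_tmul, ← map_smul]
    congr 1
    ext m
    simp [Algebra.smul_def, mul_comm]
  have hcomp : Function.Bijective (derivationSMulLift R A p ∘ₗ e.toLinearMap) := by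
    rw [he]
    exact Φ.bijective.comp (dualTensorHom_bijective.comp (LinearEquiv.bijective _))
  exact (Function.Bijective.of_comp_iff _ e.bijective).1 hcomp

end InvariantDerivations

variable (R A : Type*) [CommRing R] [CommRing A] [HopfAlgebra R A]

/-- **Theorem (cf. Ardakov, Proposition "InvVectFldsGenerate").**
Let `A` be a commutative Hopf algebra over a commutative ring `R` which is infinitesimally
flat, i.e. `I/I²` is a finitely generated projective `R`-module where `I = ker ε` is the
augmentation ideal.  Then the canonical `A`-linear maps
`A ⊗_R 𝔇_r → Der_R(A)` and `A ⊗_R 𝔇_l → Der_R(A)`, `(a, ξ) ↦ a·ξ`, are bijective, where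
`𝔇_r` (resp. `𝔇_l`) denotes the `R`-module of right- (resp. left-) invariant derivations. -/
theorem statement4
    (hfin : Module.Finite R (RingHom.ker (Bialgebra.counitAlgHom R A)).Cotangent)
    (hproj : Module.Projective R (RingHom.ker (Bialgebra.counitAlgHom R A)).Cotangent) :
    Function.Bijective (derivationSMulLift R A (rightInvariantDerivations R A)) ∧
      Function.Bijective (derivationSMulLift R A (leftInvariantDerivations R A)) := by
  have := hfin
  have := hproj
  exact ⟨derivationSMulLift_bijective_of_linearEquiv _ (.ofBijective _ rightTranslate_bijective)
      mem_rightInvariantDerivations_iff,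
    derivationSMulLift_bijective_of_linearEquiv _ (.ofBijective _ leftTranslate_bijective)
      mem_leftInvariantDerivations_iff⟩

end
end

section
/- Let p be a prime number and set ε := 1 if p is odd and ε := 2 if p = 2. Let n and j be integers with n ≥ 1 and 1 ≤ j ≤ p^n − 1. Then p^n · v_p(C(p^n, j)) ≥ ε·j, where v_p denotes the p-adic valuation on the natural numbers and C(p^n, j) the binomial coefficient; moreover, equality holds if and only if p = 2 and j = 2^{n−1}. -/
/-!
Kummer's theorem gives `v_p(C(p^n, j)) = n - v_p(j)`, and `v_p(j) < n` since `0 < j < p^n`.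
If `v_p(j) ≤ n - 2` then `p^n · v_p(C(p^n, j)) ≥ 2 p^n > 2 j`. Otherwise `v_p(j) = n - 1` and
`p^n · v_p(C(p^n, j)) = p^n > j`, which settles odd `p`; for `p = 2` the only multiple of
`2^(n-1)` below `2^n` is `2^(n-1)` itself, where equality holds.
-/

lemma padicValNat_choose_prime_pow {p n j : ℕ} (hp : p.Prime) (hjn : j ≤ p ^ n) (hj0 : j ≠ 0) :
    padicValNat p ((p ^ n).choose j) = n - padicValNat p j := by
  simpa only [Nat.factorization_def _ hp] using Nat.factorization_choose_prime_pow hp hjn hj0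

lemma padicValNat_lt_of_lt_pow {p n j : ℕ} (hj0 : j ≠ 0) (hjn : j < p ^ n) :
    padicValNat p j < n := by
  by_contra! h
  have : p ^ n ∣ j := (pow_dvd_pow p h).trans pow_padicValNat_dvd
  exact (Nat.le_of_dvd (Nat.pos_of_ne_zero hj0) this).not_gt hjn

lemma eq_two_pow_of_padicValNat_eq {a j : ℕ} (hj0 : j ≠ 0) (hja : j < 2 ^ (a + 1))
    (ha : padicValNat 2 j = a) : j = 2 ^ a := by
  obtain ⟨m, rfl⟩ : 2 ^ a ∣ j := ha ▸ pow_padicValNat_dvd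
  have hm : m < 2 := Nat.lt_of_mul_lt_mul_left (by rwa [pow_succ] at hja)
  have hm0 : m ≠ 0 := by rintro rfl; simp at hj0
  rw [show m = 1 by omega, mul_one]

/-- **Theorem (cf. Ardakov, Lemma "PadicBinomVals").**
Let `p` be a prime, and set `ε := 1` if `p` is odd and `ε := 2` if `p = 2`.  Let `n, j` be
integers with `n ≥ 1` and `1 ≤ j ≤ p^n − 1`.  Then `p^n · v_p(C(p^n, j)) ≥ ε·j`, with
equality if and only if `p = 2` and `j = 2^{n−1}`. -/
theorem statement7 (p : ℕ) (hp : p.Prime) (n j : ℕ) (hn : 1 ≤ n)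
    (hj : 1 ≤ j) (hj' : j ≤ p ^ n - 1) :
    (if p = 2 then 2 else 1) * j ≤ p ^ n * padicValNat p ((p ^ n).choose j) ∧
      (p ^ n * padicValNat p ((p ^ n).choose j) = (if p = 2 then 2 else 1) * j ↔
        p = 2 ∧ j = 2 ^ (n - 1)) := by
  have hjn : j < p ^ n := by have := hp.one_lt; have := Nat.one_le_pow n p (by omega); omega
  rw [padicValNat_choose_prime_pow hp hjn.le (by omega)]
  have ha := padicValNat_lt_of_lt_pow (by omega) hjn
  by_cases htop : padicValNat p j = n - 1
  · rw [htop, show n - (n - 1) = 1 by omega, mul_one]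
    by_cases hp2 : p = 2
    · subst hp2
      have hj2 : j = 2 ^ (n - 1) :=
        eq_two_pow_of_padicValNat_eq (by omega) (by rwa [Nat.sub_add_cancel hn]) htop
      have h2n : 2 ^ n = 2 * 2 ^ (n - 1) := by rw [← pow_succ', Nat.sub_add_cancel hn]
      simp [hj2, h2n]
    · simp only [hp2, if_false, one_mul, false_and, iff_false]
      omega
  · have hstrict : (if p = 2 then 2 else 1) * j < p ^ n * (n - padicValNat p j) := calc
      (if p = 2 then 2 else 1) * j ≤ 2 * j := Nat.mul_le_mul_right _ (by split <;> omega)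
      _ < p ^ n * 2 := by omega
      _ ≤ p ^ n * (n - padicValNat p j) := Nat.mul_le_mul_left _ (by omega)
    refine ⟨hstrict.le, iff_of_false hstrict.ne' ?_⟩
    rintro ⟨rfl, rfl⟩
    exact htop (padicValNat.prime_pow (n - 1))
end

section
/- Let S be a ring with an action of a group G by ring automorphisms, and suppose the action admits a trivialisation β : G → Sˣ (so β is a group homomorphism with β(g)·s·β(g)⁻¹ = g•s for all g ∈ G and s ∈ S). Let (T, i, γ) be a skew group ring for this action, i.e. i : S → T is a ring homomorphism and γ : G → Tˣ a group homomorphism with γ(g)·i(s)·γ(g)⁻¹ = i(g•s) for all g, s, such that T is free as a left S-module (via i) with basis (γ(g))_{g∈G}. Then there is a ring isomorphism from the group ring MonoidAlgebra S G onto T which sends the element s·g (for s ∈ S and g ∈ G) to i(s·β(g)⁻¹)·γ(g); in particular, the skew group ring S ⋊ G is isomorphic as a ring to the ordinary group ring S[G]. -/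
/-!
Twisting the group elements by the trivialisation turns the skew group ring into an ordinary
one: `δ(g) := i(β(g)⁻¹)·γ(g)` is again multiplicative, and since conjugation by `γ(g)` and by
`β(g)` induce the same automorphism of `S`, the element `δ(g)` commutes with `i(S)`. Hence
`s·g ↦ i(s)·δ(g)` is a ring homomorphism `S[G] → T`. In coordinates it multiplies the
coefficient of `g` on the right by the unit `β(g)⁻¹` and then forms `Σ_g i(s_g)·γ(g)`; both
steps are bijective, the second because `(γ(g))_g` is a basis.
-/

namespace Finsupp

variable {α M : Type*} [MonoidWithZero M]

def mulRightUnits (u : α → Mˣ) (c : α →₀ M) : α →₀ M :=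
  ⟨c.support, fun a => c a * u a, fun a => by
    simp only [mem_support_iff, ne_eq, Units.mul_left_eq_zero]⟩

theorem mulRightUnits_apply (u : α → Mˣ) (c : α →₀ M) (a : α) :
    mulRightUnits u c a = c a * u a :=
  rfl

def mulRightUnitsEquiv (u : α → Mˣ) : (α →₀ M) ≃ (α →₀ M) where
  toFun := mulRightUnits u
  invFun := mulRightUnits fun a => (u a)⁻¹
  left_inv c := by ext a; simp only [mulRightUnits_apply, Units.mul_inv_cancel_right]
  right_inv c := by ext a; simp only [mulRightUnits_apply, Units.inv_mul_cancel_right]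

end Finsupp

namespace SkewGroupRing

variable {S G T : Type*} [Ring S] [Group G] [MulSemiringAction G S] [Ring T]
  {β : G →* Sˣ} {i : S →+* T} {γ : G →* Tˣ}

theorem inv_mul_smul_eq_mul_inv (hβ : ∀ (g : G) (s : S), (β g : S) * s * ((β g)⁻¹ : Sˣ) = g • s)
    (g : G) (s : S) : (((β g)⁻¹ : Sˣ) : S) * (g • s) = s * ((β g)⁻¹ : Sˣ) := by
  rw [← hβ g, ← mul_assoc, ← mul_assoc, Units.inv_mul, one_mul]

theorem mul_map_eq_map_smul_mul
    (hγ : ∀ (g : G) (s : S), (γ g : T) * i s * ((γ g)⁻¹ : Tˣ) = i (g • s)) (g : G) (s : S) :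
    (γ g : T) * i s = i (g • s) * γ g := by
  rw [← hγ g, Units.inv_mul_cancel_right]

variable (hβ : ∀ (g : G) (s : S), (β g : S) * s * ((β g)⁻¹ : Sˣ) = g • s)
  (hγ : ∀ (g : G) (s : S), (γ g : T) * i s * ((γ g)⁻¹ : Tˣ) = i (g • s))

def untwist : G →* T where
  toFun g := i ((β g)⁻¹ : Sˣ) * γ g
  map_one' := by simp
  map_mul' g h := by
    have hβ_mul : (((β (g * h))⁻¹ : Sˣ) : S) = ((β g)⁻¹ : Sˣ) * (g • (((β h)⁻¹ : Sˣ) : S)) := by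
      rw [inv_mul_smul_eq_mul_inv hβ, map_mul, mul_inv_rev, Units.val_mul]
    calc i ((β (g * h))⁻¹ : Sˣ) * (γ (g * h) : T)
        = i ((β g)⁻¹ : Sˣ) * (i (g • (((β h)⁻¹ : Sˣ) : S)) * γ g) * γ h := by
          rw [hβ_mul, map_mul γ, Units.val_mul, map_mul i]; noncomm_ring
      _ = i ((β g)⁻¹ : Sˣ) * γ g * (i ((β h)⁻¹ : Sˣ) * γ h) := by
          rw [← mul_map_eq_map_smul_mul hγ]; noncomm_ring

theorem untwist_apply (g : G) : untwist hβ hγ g = i ((β g)⁻¹ : Sˣ) * γ g :=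
  rfl

theorem commute_untwist (s : S) (g : G) : Commute (i s) (untwist hβ hγ g) :=
  calc i s * (i ((β g)⁻¹ : Sˣ) * γ g)
      = i ((β g)⁻¹ : Sˣ) * (i (g • s) * γ g) := by
        rw [← mul_assoc, ← map_mul, ← inv_mul_smul_eq_mul_inv hβ, map_mul, mul_assoc]
    _ = i ((β g)⁻¹ : Sˣ) * γ g * i s := by
        rw [← mul_map_eq_map_smul_mul hγ, mul_assoc]

end SkewGroupRing

/-- **Theorem (cf. Ardakov, Lemma "Untwist").**
Let `S` be a ring with an action of a group `G` by ring automorphisms admitting a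
trivialisation `β : G → Sˣ` (a group homomorphism with `β(g)·s·β(g)⁻¹ = g • s` for all
`g, s`).  Let `(T, i, γ)` be a skew group ring for this action: `i : S → T` is a ring
homomorphism, `γ : G → Tˣ` a group homomorphism with `γ(g)·i(s)·γ(g)⁻¹ = i(g • s)`, and every
element of `T` is uniquely a finite sum `Σ_g i(s_g)·γ(g)` (i.e. `T` is free as a left
`S`-module via `i` with basis `(γ(g))_{g ∈ G}`).  Then there is a ring isomorphism
`S[G] ≅ T` sending `s·g` to `i(s·β(g)⁻¹)·γ(g)`; in particular the skew group ring `S ⋊ G`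
is isomorphic to the ordinary group ring `S[G]`. -/
theorem statement12
    (S : Type*) [Ring S] (G : Type*) [Group G] [MulSemiringAction G S]
    (β : G →* Sˣ) (hβ : ∀ (g : G) (s : S), (β g : S) * s * ((β g)⁻¹ : Sˣ) = g • s)
    (T : Type*) [Ring T] (i : S →+* T) (γ : G →* Tˣ)
    (hγ : ∀ (g : G) (s : S), (γ g : T) * i s * ((γ g)⁻¹ : Tˣ) = i (g • s))
    (hbasis : ∀ t : T, ∃! c : G →₀ S, t = c.sum fun g s => i s * (γ g : T)) :
    ∃ φ : MonoidAlgebra S G ≃+* T,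
      ∀ (s : S) (g : G), φ (MonoidAlgebra.single g s) = i (s * ((β g)⁻¹ : Sˣ)) * (γ g : T) := by
  let φ := MonoidAlgebra.liftNCRingHom i (SkewGroupRing.untwist hβ hγ)
    (SkewGroupRing.commute_untwist hβ hγ)
  let e := Finsupp.mulRightUnitsEquiv fun g => (β g)⁻¹
  have hφ : ⇑φ = (fun c : G →₀ S => c.sum fun g s => i s * γ g) ∘ e ∘ MonoidAlgebra.coeffEquiv := by
    funext x
    show x.coeff.sum (fun g s => i s * SkewGroupRing.untwist hβ hγ g)
      = x.coeff.sum fun g s => i (s * ((β g)⁻¹ : Sˣ)) * γ g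
    exact Finsupp.sum_congr fun g _ => by rw [SkewGroupRing.untwist_apply, map_mul, mul_assoc]
  have hsum : Function.Bijective fun c : G →₀ S => c.sum fun g s => i s * γ g :=
    (Function.bijective_iff_existsUnique _).2 fun t => by simpa only [eq_comm] using hbasis t
  refine ⟨.ofBijective φ (hφ ▸ hsum.comp (e.bijective.comp MonoidAlgebra.coeffEquiv.bijective)),
    fun s g => ?_⟩
  simp only [RingEquiv.ofBijective_apply, φ, MonoidAlgebra.liftNCRingHom_single,
    SkewGroupRing.untwist_apply, map_mul, mul_assoc]
end
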